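/- Let n ≥ 1 be an integer and b ∈ ℂ with b ≠ 1/2. Then the only pairs (U,V) of ℂ-subspaces of Pⁿ such that U × V is stable under all operators L_k and G_k (k ∈ ℤ) are ({0},{0}) and (Pⁿ,Pⁿ); i.e., this module over the N=1 Ramond algebra is irreducible. -/

import Mathlib

/-!
Write `E` (`Tdeg₀` below) for the common operator `T_0^c` and `t` for multiplication by `t`; then
`T_k^c = t^k E + c k t^k` and `[E, t] = t`.  For a stable pair `U × V`, `G_0` gives `V ⊆ U`,
and `T_k^{2b} - T_k^{b+1/2} = (b - 1/2) k t^k` shows that `V` is a `ℂ[t,t⁻¹]`-submodule stable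
under `E`; it is nonzero as soon as `U` is, since `E u = T_0^{2b} u ∈ V`.

Give `t^p` in component `i` the weight `(n+1)p + i`.  Then multiplication by `t^k` shifts
weights by `(n+1)k` and `E` raises the top weight by exactly `n+2`, so for `w ≠ 0` the vectors
`w, Ew, …, Eⁿw` have top weights in distinct classes mod `n+1` and are linearly independent
over `ℂ[t,t⁻¹]`.  Their determinant `δ ≠ 0` satisfies `δ Pⁿ ⊆ V`, so `Pⁿ/V` is
finite-dimensional.  On that quotient `[E, t] = t` with `t` invertible, and taking traces of
`t⁻¹ E t = E + 1` forces `dim Pⁿ/V = 0`.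
-/

open LaurentPolynomial

noncomputable section

abbrev Lp := LaurentPolynomial ℂ

/-- `(T_k^c u)₀ = t^k(D+ck)u₀ + t^{k+2}·u_{n−1}` and
`(T_k^c u)_m = t^k(D+ck)u_m + t^{k+1}·u_{m−1}` for `1 ≤ m ≤ n−1`
(note `0 - 1 = n - 1` by the wrap-around subtraction of `Fin n`). -/
def Tdeg (D : Lp →ₗ[ℂ] Lp) {n : ℕ} (c : ℂ) (k : ℤ) (u : Fin (n + 1) → Lp) :
    Fin (n + 1) → Lp :=
  fun i => T k * (D (u i) + (c * (k : ℂ)) • u i) +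
    (if i = 0 then T (k + 2) else T (k + 1)) * u (i - 1)

/-- `L_k(u,v) = (T_k^b u, T_k^{b+1/2} v)` -/
def DegL (D : Lp →ₗ[ℂ] Lp) {n : ℕ} (b : ℂ) (k : ℤ) :
    (Fin (n + 1) → Lp) × (Fin (n + 1) → Lp) → (Fin (n + 1) → Lp) × (Fin (n + 1) → Lp) :=
  fun w => (Tdeg D b k w.1, Tdeg D (b + 1 / 2) k w.2)

/-- `G_k(u,v) = (−t^k·v, T_k^{2b} u)` -/
def DegG (D : Lp →ₗ[ℂ] Lp) {n : ℕ} (b : ℂ) (k : ℤ) :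
    (Fin (n + 1) → Lp) × (Fin (n + 1) → Lp) → (Fin (n + 1) → Lp) × (Fin (n + 1) → Lp) :=
  fun w => (fun i => -(T k * w.2 i), Tdeg D (2 * b) k w.1)

/-- `U × V` is stable under all the operators `L_k` and `G_k`. -/
def DegInv (D : Lp →ₗ[ℂ] Lp) {n : ℕ} (b : ℂ)
    (U V : Submodule ℂ (Fin (n + 1) → Lp)) : Prop :=
  ∀ k : ℤ, ∀ u ∈ U, ∀ v ∈ V,
    (DegL D b k (u, v)).1 ∈ U ∧ (DegL D b k (u, v)).2 ∈ V ∧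
    (DegG D b k (u, v)).1 ∈ U ∧ (DegG D b k (u, v)).2 ∈ V

section TraceArgument

variable {K M : Type*} [Field K] [CharZero K] [AddCommGroup M] [Module K M]

theorem Module.End.subsingleton_of_mul_eq_mul_add_self [Module.Finite K M]
    {E T T' : Module.End K M} (hTT' : T * T' = 1) (hT'T : T' * T = 1)
    (h : E * T = T * E + T) : Subsingleton M := by
  have htr : LinearMap.trace K M E = LinearMap.trace K M E + Module.finrank K M :=
    calc LinearMap.trace K M E = LinearMap.trace K M (E * T * T') := by
          rw [mul_assoc, hTT', mul_one]
      _ = LinearMap.trace K M (T' * (E * T)) := LinearMap.trace_mul_comm K _ _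
      _ = LinearMap.trace K M E + Module.finrank K M := by
          rw [h, mul_add, ← mul_assoc, hT'T, one_mul, map_add, LinearMap.trace_one]
  exact Module.finrank_zero_iff.mp (by exact_mod_cast left_eq_add.mp htr)

theorem Submodule.eq_top_of_mul_eq_mul_add_self (W : Submodule K M) [Module.Finite K (M ⧸ W)]
    {E T T' : Module.End K M} (hE : W ≤ W.comap E) (hT : W ≤ W.comap T) (hT' : W ≤ W.comap T')
    (hTT' : T * T' = 1) (hT'T : T' * T = 1) (h : E * T = T * E + T) : W = ⊤ := by
  rw [← Submodule.Quotient.subsingleton_iff]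
  refine Module.End.subsingleton_of_mul_eq_mul_add_self (E := W.mapQ W E hE)
    (T := W.mapQ W T hT) (T' := W.mapQ W T' hT') ?_ ?_ ?_ <;> ext x
  · simpa using congr(W.mkQ ($hTT' x))
  · simpa using congr(W.mkQ ($hT'T x))
  · simpa using congr(W.mkQ ($h x))

end TraceArgument

open Matrix in
theorem Matrix.det_smul_mem_span_col {R ι : Type*} [CommRing R] [Fintype ι] [DecidableEq ι]
    (A : Matrix ι ι R) (f : ι → R) : A.det • f ∈ Submodule.span R (Set.range A.col) := by
  have h : A.det • f = A *ᵥ (A.adjugate *ᵥ f) := by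
    rw [mulVec_mulVec, mul_adjugate, smul_mulVec, one_mulVec]
  rw [h, mulVec_eq_sum]
  simp_rw [op_smul_eq_smul]
  exact Submodule.sum_mem _ fun j _ =>
    Submodule.smul_mem _ _ (Submodule.subset_span (Set.mem_range_self j))

namespace LaurentPolynomial

section Semiring

variable {R : Type*} [Semiring R]

theorem coeff_T_mul (a : ℤ) (f : R[T;T⁻¹]) (p : ℤ) : (T a * f).coeff p = f.coeff (p - a) := by
  rw [T, AddMonoidAlgebra.coeff_single_mul_apply, one_mul, neg_add_eq_sub]

theorem sum_coeff_smul_T (f : R[T;T⁻¹]) : ∑ q ∈ f.coeff.support, f.coeff q • T q = f := by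
  conv_rhs => rw [← AddMonoidAlgebra.sum_coeff_single f]
  refine Finset.sum_congr rfl fun q _ => ?_
  rw [T, AddMonoidAlgebra.smul_single, smul_eq_mul, mul_one]

theorem exists_coeff_ne_zero_forall_gt {f : R[T;T⁻¹]} (hf : f ≠ 0) :
    ∃ A, f.coeff A ≠ 0 ∧ ∀ q > A, f.coeff q = 0 := by
  have hne : f.coeff.support.Nonempty := Finsupp.support_nonempty_iff.mpr (by simpa using hf)
  refine ⟨_, Finsupp.mem_support_iff.mp (f.coeff.support.max'_mem hne), fun q hq => ?_⟩
  by_contra h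
  exact absurd (f.coeff.support.le_max' q (Finsupp.mem_support_iff.mpr h)) (not_le.mpr hq)

end Semiring

section Derivation

variable {R : Type*} [CommRing R] {D : R[T;T⁻¹] →ₗ[R] R[T;T⁻¹]}

theorem coeff_apply_of_map_T (hD : ∀ m : ℤ, D (T m) = (m : R) • T m) (f : R[T;T⁻¹]) (p : ℤ) :
    (D f).coeff p = p * f.coeff p := by
  induction f using AddMonoidAlgebra.induction_linear with
  | zero => simp
  | add f g hf hg => simp [hf, hg, mul_add]
  | single a r =>
    rw [show AddMonoidAlgebra.single a r = r • (T a : R[T;T⁻¹]) by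
      rw [T, AddMonoidAlgebra.smul_single, smul_eq_mul, mul_one], map_smul, hD]
    by_cases h : a = p <;> simp [h, mul_comm]

theorem map_T_mul_of_map_T (hD : ∀ m : ℤ, D (T m) = (m : R) • T m) (k : ℤ) (f : R[T;T⁻¹]) :
    D (T k * f) = T k * D f + (k : R) • (T k * f) := by
  ext p
  rw [AddMonoidAlgebra.coeff_add, Finsupp.add_apply, AddMonoidAlgebra.coeff_smul,
    Finsupp.smul_apply, coeff_apply_of_map_T hD, coeff_T_mul, coeff_T_mul, coeff_apply_of_map_T hD,
    smul_eq_mul]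
  push_cast
  ring

end Derivation

section FiniteCodimension

variable {K : Type*} [Field K]

theorem T_mem_of_mul_mem {δ : K[T;T⁻¹]} {G : Submodule K K[T;T⁻¹]} (hG : ∀ f, δ * f ∈ G)
    {q₀ : ℤ} (hq₀ : q₀ ∈ δ.coeff.support) (e : ℤ)
    (h : ∀ q ∈ δ.coeff.support, q ≠ q₀ → T (q + e - q₀) ∈ G) : T e ∈ G := by
  have hmul : δ * T (e - q₀) = δ.coeff q₀ • T e +
      ∑ q ∈ δ.coeff.support.erase q₀, δ.coeff q • T (q + e - q₀) := by
    conv_lhs => rw [← sum_coeff_smul_T δ]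
    rw [Finset.sum_mul, ← Finset.add_sum_erase _ _ hq₀]
    simp only [smul_mul_assoc, ← T_add]
    ring_nf
  have hlead : δ.coeff q₀ • T e ∈ G := by
    rw [eq_sub_of_add_eq hmul.symm]
    exact G.sub_mem (hG _) (G.sum_mem fun q hq =>
      G.smul_mem _ (h q (Finset.mem_of_mem_erase hq) (Finset.ne_of_mem_erase hq)))
  exact (G.smul_mem_iff (Finsupp.mem_support_iff.mp hq₀)).mp hlead

/-- The window `s` is `[min supp δ, max supp δ)`: the extreme terms of `δ` express every other
monomial through monomials closer to it. -/
theorem exists_finset_forall_T_mem_eq_top {δ : K[T;T⁻¹]} (hδ : δ ≠ 0) :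
    ∃ s : Finset ℤ, ∀ G : Submodule K K[T;T⁻¹], (∀ f, δ * f ∈ G) → (∀ e ∈ s, T e ∈ G) →
      G = ⊤ := by
  have hne : δ.coeff.support.Nonempty := Finsupp.support_nonempty_iff.mpr (by simpa using hδ)
  set α := δ.coeff.support.min' hne
  set β := δ.coeff.support.max' hne
  refine ⟨Finset.Ico α β, fun G hG hs => ?_⟩
  have up : ∀ e, α ≤ e → T e ∈ G := by
    intro e
    induction e using Int.strongRec (m := α) with
    | lt e he => exact fun h => absurd h (not_le.mpr he)
    | ge e _ ih =>
      intro hαe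
      by_cases heβ : e < β
      · exact hs e (Finset.mem_Ico.mpr ⟨hαe, heβ⟩)
      refine T_mem_of_mul_mem hG (δ.coeff.support.max'_mem hne) e fun q hq hqβ => ?_
      have hαq := δ.coeff.support.min'_le q hq
      have hqβ' := lt_of_le_of_ne (δ.coeff.support.le_max' q hq) hqβ
      exact ih _ (by omega) (by omega)
  have all : ∀ e, T e ∈ G := by
    intro e
    rw [← neg_neg e]
    induction -e using Int.strongRec (m := 1 - α) with
    | lt e he => exact up _ (by omega)
    | ge e _ ih =>
      refine T_mem_of_mul_mem hG (δ.coeff.support.min'_mem hne) (-e) fun q hq hqα => ?_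
      have hαq := lt_of_le_of_ne (δ.coeff.support.min'_le q hq) (Ne.symm hqα)
      convert ih (α - q + e) (by omega) using 2
      ring
  rw [eq_top_iff]
  intro f _
  rw [← sum_coeff_smul_T f]
  exact G.sum_mem fun q _ => G.smul_mem _ (all q)

theorem finite_quotient_of_smul_mem {ι : Type*} [Fintype ι] [DecidableEq ι] {δ : K[T;T⁻¹]}
    (hδ : δ ≠ 0) (W : Submodule K (ι → K[T;T⁻¹])) (hW : ∀ f, δ • f ∈ W) :
    Module.Finite K ((ι → K[T;T⁻¹]) ⧸ W) := by
  obtain ⟨s, hs⟩ := exists_finset_forall_T_mem_eq_top hδ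
  set S : Set (ι → K[T;T⁻¹]) := Set.range fun p : ι × s => Pi.single p.1 (T p.2)
  have hsup : W ⊔ Submodule.span K S = ⊤ := by
    have hsingle : ∀ i, (W ⊔ Submodule.span K S).comap (LinearMap.single K _ i) = ⊤ := by
      intro i
      refine hs _ (fun f => Submodule.mem_sup_left ?_) fun e he => Submodule.mem_sup_right
        (Submodule.subset_span ⟨(i, ⟨e, he⟩), rfl⟩)
      simpa [← smul_eq_mul, ← Pi.single_smul'] using hW (Pi.single i f)
    rw [eq_top_iff]
    intro f _
    rw [← Finset.univ_sum_single f]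
    exact Submodule.sum_mem _ fun i _ => (hsingle i).ge (Submodule.mem_top (x := f i))
  rw [Module.finite_def, ← (Submodule.map_mkQ_eq_top W _).mpr hsup, Submodule.map_span]
  exact Submodule.fg_span ((Set.finite_range _).image _)

end FiniteCodimension

end LaurentPolynomial

def Tdeg₀ (D : Lp →ₗ[ℂ] Lp) (n : ℕ) : Module.End ℂ (Fin (n + 1) → Lp) where
  toFun u i := D (u i) + (if i = 0 then T 2 else T 1) * u (i - 1)
  map_add' u v := by
    ext1 i
    simp only [Pi.add_apply, map_add, mul_add]
    abel
  map_smul' c u := by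
    ext1 i
    simp only [Pi.smul_apply, map_smul, mul_smul_comm, smul_add, RingHom.id_apply]

variable {n : ℕ} {D : Lp →ₗ[ℂ] Lp}

lemma Tdeg_eq (c : ℂ) (k : ℤ) (u : Fin (n + 1) → Lp) :
    Tdeg D c k u = (T k : Lp) • Tdeg₀ D n u + (c * k) • (T k : Lp) • u := by
  ext1 i
  simp only [Tdeg, Tdeg₀, LinearMap.coe_mk, AddHom.coe_mk, Pi.add_apply, Pi.smul_apply,
    smul_eq_mul, mul_smul_comm, mul_add]
  split_ifs <;> simp only [T_add] <;> ring

lemma Tdeg_zero (c : ℂ) (u : Fin (n + 1) → Lp) : Tdeg D c 0 u = Tdeg₀ D n u := by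
  simp [Tdeg_eq, T_zero]

lemma Tdeg₀_T_one_smul (hD : ∀ m : ℤ, D (T m) = (m : ℂ) • T m) (u : Fin (n + 1) → Lp) :
    Tdeg₀ D n ((T 1 : Lp) • u) = (T 1 : Lp) • Tdeg₀ D n u + (T 1 : Lp) • u := by
  ext1 i
  simp only [Tdeg₀, LinearMap.coe_mk, AddHom.coe_mk, Pi.add_apply, Pi.smul_apply, smul_eq_mul,
    map_T_mul_of_map_T hD, Int.cast_one, one_smul]
  ring

/-- The coefficient of weight `d`, where `t^p` in component `i` has weight `(n+1)p + i`. -/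
def weightCoeff (n : ℕ) (d : ℤ) : (Fin (n + 1) → Lp) →ₗ[ℂ] ℂ :=
  Finsupp.lapply (d / (n + 1)) ∘ₗ (AddMonoidAlgebra.coeffLinearEquiv ℂ).toLinearMap ∘ₗ
    LinearMap.proj ⟨d.natMod (n + 1 : ℕ), Int.natMod_lt n.succ_ne_zero⟩

lemma emod_mul_add (p : ℤ) (i : Fin (n + 1)) : ((n + 1) * p + i) % (n + 1 : ℤ) = i := by
  rw [Int.add_comm, Int.add_mul_emod_self_left]
  exact Int.emod_eq_of_lt (by positivity) (by omega)

lemma ediv_mul_add (p : ℤ) (i : Fin (n + 1)) : ((n + 1) * p + i) / (n + 1 : ℤ) = p := by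
  rw [Int.add_comm, Int.add_mul_ediv_left _ _ (by positivity),
    Int.ediv_eq_zero_of_lt (by positivity) (by omega), zero_add]

lemma eq_of_mul_add_eq_mul_add {p q : ℤ} {i j : Fin (n + 1)}
    (h : (n + 1) * p + i = (n + 1) * q + j) : i = j := by
  have := congrArg (· % (n + 1 : ℤ)) h
  simp only [emod_mul_add] at this
  exact Fin.ext (by exact_mod_cast this)

lemma exists_mul_add_eq (d : ℤ) : ∃ (p : ℤ) (i : Fin (n + 1)), (n + 1) * p + i = d := by
  refine ⟨d / (n + 1), ⟨d.natMod (n + 1 : ℕ), Int.natMod_lt n.succ_ne_zero⟩, ?_⟩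
  have := Int.emod_nonneg d (by omega : (n + 1 : ℤ) ≠ 0)
  simp only [Int.natMod, Nat.cast_add, Nat.cast_one, Int.toNat_of_nonneg this]
  exact Int.mul_ediv_add_emod d _

lemma weightCoeff_mul_add (p : ℤ) (i : Fin (n + 1)) (u : Fin (n + 1) → Lp) :
    weightCoeff n ((n + 1) * p + i) u = (u i).coeff p := by
  change (u ⟨_, _⟩).coeff (((n + 1) * p + i) / (n + 1 : ℤ)) = _
  rw [ediv_mul_add]
  congr
  simp only [Int.natMod, Nat.cast_add, Nat.cast_one, emod_mul_add]
  simp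

lemma weightCoeff_T_smul (k d : ℤ) (u : Fin (n + 1) → Lp) :
    weightCoeff n d ((T k : Lp) • u) = weightCoeff n (d - (n + 1) * k) u := by
  obtain ⟨p, i, rfl⟩ := exists_mul_add_eq (n := n) d
  rw [show (n + 1) * p + i - (n + 1) * k = (n + 1) * (p - k) + (i : ℤ) by ring,
    weightCoeff_mul_add, weightCoeff_mul_add, Pi.smul_apply, smul_eq_mul, coeff_T_mul]

/-- The shift part of `Tdeg₀` multiplies `u (i - 1)` by `t` (by `t²` into component `0`), which
raises weights by exactly `n + 2`. -/
lemma weightCoeff_Tdeg₀ (hD : ∀ m : ℤ, D (T m) = (m : ℂ) • T m) (d : ℤ) (u : Fin (n + 1) → Lp) :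
    weightCoeff n d (Tdeg₀ D n u) =
      (d / (n + 1) : ℤ) * weightCoeff n d u + weightCoeff n (d - (n + 2)) u := by
  obtain ⟨p, i, rfl⟩ := exists_mul_add_eq (n := n) d
  rw [ediv_mul_add, weightCoeff_mul_add, weightCoeff_mul_add]
  simp only [Tdeg₀, LinearMap.coe_mk, AddHom.coe_mk, AddMonoidAlgebra.coeff_add,
    Finsupp.add_apply, coeff_apply_of_map_T hD]
  congr 1
  induction i using Fin.cases with
  | zero =>
    rw [if_pos rfl, coeff_T_mul, show (0 : Fin (n + 1)) - 1 = Fin.last n from Fin.ext (by simp),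
      show (n + 1) * p + ((0 : Fin (n + 1)) : ℤ) - (n + 2) = (n + 1) * (p - 2) + (Fin.last n : ℤ)
        by simp only [Fin.coe_ofNat_eq_mod, Nat.zero_mod, CharP.cast_eq_zero, add_zero,
          Fin.val_last]; ring, weightCoeff_mul_add]
  | succ j =>
    rw [if_neg (Fin.succ_ne_zero j), coeff_T_mul,
      show j.succ - 1 = j.castSucc from Fin.ext (by simp [Fin.coe_sub_one, Fin.succ_ne_zero]),
      show (n + 1) * p + (j.succ : ℤ) - (n + 2) = (n + 1) * (p - 1) + (j.castSucc : ℤ) by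
        simp only [Fin.val_succ, Nat.cast_add, Nat.cast_one, Fin.val_castSucc]; ring,
      weightCoeff_mul_add]

def HasLeadingTerm (u : Fin (n + 1) → Lp) (d : ℤ) (c : ℂ) : Prop :=
  weightCoeff n d u = c ∧ ∀ d' > d, weightCoeff n d' u = 0

namespace HasLeadingTerm

variable {u : Fin (n + 1) → Lp} {d : ℤ} {c : ℂ}

lemma ne_zero (h : HasLeadingTerm u d c) (hc : c ≠ 0) : u ≠ 0 := by
  rintro rfl
  exact hc (h.1 ▸ map_zero _)

lemma map_Tdeg₀ (hD : ∀ m : ℤ, D (T m) = (m : ℂ) • T m) (h : HasLeadingTerm u d c) :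
    HasLeadingTerm (Tdeg₀ D n u) (d + (n + 2)) c := by
  refine ⟨?_, fun d' hd' => ?_⟩
  · rw [weightCoeff_Tdeg₀ hD, h.2 _ (by omega), add_sub_cancel_right, h.1, mul_zero, zero_add]
  · rw [weightCoeff_Tdeg₀ hD, h.2 _ (by omega), h.2 _ (by omega), mul_zero, zero_add]

lemma iterate_map_Tdeg₀ (hD : ∀ m : ℤ, D (T m) = (m : ℂ) • T m) (h : HasLeadingTerm u d c)
    (j : ℕ) : HasLeadingTerm ((Tdeg₀ D n)^[j] u) (d + j * (n + 2)) c := by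
  induction j with
  | zero => simpa using h
  | succ j ih =>
    rw [Function.iterate_succ_apply', Nat.cast_succ, add_one_mul, ← add_assoc]
    exact ih.map_Tdeg₀ hD

lemma smul (h : HasLeadingTerm u d c) {a : Lp} {A : ℤ} (hA : ∀ q > A, a.coeff q = 0) :
    HasLeadingTerm (a • u) ((n + 1) * A + d) (a.coeff A * c) := by
  have hle : ∀ q ∈ a.coeff.support, q ≤ A := fun q hq =>
    not_lt.mp fun hlt => Finsupp.mem_support_iff.mp hq (hA q hlt)
  have hexp : ∀ d', weightCoeff n d' (a • u) =
      ∑ q ∈ a.coeff.support, a.coeff q * weightCoeff n (d' - (n + 1) * q) u := by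
    intro d'
    conv_lhs => rw [← sum_coeff_smul_T a]
    simp only [Finset.sum_smul, smul_assoc, map_sum, map_smul, weightCoeff_T_smul, smul_eq_mul]
  refine ⟨?_, fun d' hd' => ?_⟩
  · rw [hexp, Finset.sum_eq_single A]
    · rw [add_sub_cancel_left, h.1]
    · intro q hq hqA
      have : (n + 1) * q < (n + 1) * A :=
        mul_lt_mul_of_pos_left (lt_of_le_of_ne (hle q hq) hqA) (by positivity)
      rw [h.2 _ (by omega), mul_zero]
    · intro hA'
      rw [Finsupp.notMem_support_iff.mp hA', zero_mul]
  · rw [hexp]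
    refine Finset.sum_eq_zero fun q hq => ?_
    have : (n + 1) * q ≤ (n + 1) * A := mul_le_mul_of_nonneg_left (hle q hq) (by positivity)
    rw [h.2 _ (by omega), mul_zero]

end HasLeadingTerm

lemma hasLeadingTerm_sum {ι : Type*} {s : Finset ι} {f : ι → Fin (n + 1) → Lp} {d : ι → ℤ}
    {c : ι → ℂ} {i₀ : ι} (hi₀ : i₀ ∈ s) (hf : ∀ i ∈ s, HasLeadingTerm (f i) (d i) (c i))
    (hd : ∀ i ∈ s, i ≠ i₀ → d i < d i₀) : HasLeadingTerm (∑ i ∈ s, f i) (d i₀) (c i₀) := by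
  refine ⟨?_, fun d' hd' => ?_⟩
  · rw [map_sum, Finset.sum_eq_single_of_mem i₀ hi₀ fun i hi hne => (hf i hi).2 _ (hd i hi hne),
      (hf i₀ hi₀).1]
  · rw [map_sum]
    exact Finset.sum_eq_zero fun i hi => (hf i hi).2 _ <| by
      rcases eq_or_ne i i₀ with rfl | hne
      · exact hd'
      · exact (hd i hi hne).trans hd'

lemma exists_hasLeadingTerm {u : Fin (n + 1) → Lp} (hu : u ≠ 0) :
    ∃ d c, c ≠ 0 ∧ HasLeadingTerm u d c := by
  obtain ⟨i, hi⟩ := Function.ne_iff.mp hu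
  set S := Finset.univ.sigma fun i => (u i).coeff.support
  have hne : S.Nonempty := by
    obtain ⟨p, hp⟩ := (Finsupp.support_nonempty_iff (f := (u i).coeff)).mpr (by simpa using hi)
    exact ⟨⟨i, p⟩, Finset.mem_sigma.mpr ⟨Finset.mem_univ _, hp⟩⟩
  obtain ⟨⟨i, p⟩, hmem, hmax⟩ := S.exists_max_image (fun x => (n + 1) * x.2 + (x.1 : ℤ)) hne
  refine ⟨(n + 1) * p + i, (u i).coeff p,
    Finsupp.mem_support_iff.mp (Finset.mem_sigma.mp hmem).2, weightCoeff_mul_add _ _ _, ?_⟩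
  intro d' hd'
  obtain ⟨q, j, rfl⟩ := exists_mul_add_eq (n := n) d'
  rw [weightCoeff_mul_add]
  by_contra h
  exact absurd (hmax ⟨j, q⟩ (Finset.mem_sigma.mpr ⟨Finset.mem_univ _,
    Finsupp.mem_support_iff.mpr h⟩)) (not_le.mpr hd')

lemma Tdeg₀_ne_zero (hD : ∀ m : ℤ, D (T m) = (m : ℂ) • T m) {u : Fin (n + 1) → Lp}
    (hu : u ≠ 0) : Tdeg₀ D n u ≠ 0 := by
  obtain ⟨d, c, hc, h⟩ := exists_hasLeadingTerm hu
  exact (h.map_Tdeg₀ hD).ne_zero hc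

theorem linearIndependent_iterate_Tdeg₀ (hD : ∀ m : ℤ, D (T m) = (m : ℂ) • T m)
    {w : Fin (n + 1) → Lp} (hw : w ≠ 0) :
    LinearIndependent Lp fun j : Fin (n + 1) => (Tdeg₀ D n)^[j] w := by
  obtain ⟨dw, cw, hcw, hlead⟩ := exists_hasLeadingTerm hw
  rw [Fintype.linearIndependent_iff]
  intro g hg
  by_contra! hex
  choose! A hA0 hA using fun j (hj : g j ≠ 0) => exists_coeff_ne_zero_forall_gt hj
  set J := Finset.univ.filter fun j => g j ≠ 0
  set ω : Fin (n + 1) → ℤ := fun j => (n + 1) * A j + (dw + (j : ℕ) * (n + 2))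
  obtain ⟨j₀, hj₀⟩ := hex
  obtain ⟨jm, hjm, hmax⟩ := J.exists_max_image ω ⟨j₀, by simpa [J] using hj₀⟩
  have hlt : ∀ j ∈ J, j ≠ jm → ω j < ω jm := fun j hj hne =>
    lt_of_le_of_ne (hmax j hj) fun heq => hne <|
      eq_of_mul_add_eq_mul_add (p := A j + j) (q := A jm + jm) (by linear_combination heq)
  have hsum := hasLeadingTerm_sum hjm
    (fun j hj => (hlead.iterate_map_Tdeg₀ hD j).smul (hA j (Finset.mem_filter.mp hj).2)) hlt
  refine hsum.ne_zero (mul_ne_zero (hA0 jm (Finset.mem_filter.mp hjm).2) hcw) ?_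
  rw [Finset.sum_filter_of_ne fun j _ h => left_ne_zero_of_smul h, hg]

theorem Submodule.eq_top_of_Tdeg₀_mem (hD : ∀ m : ℤ, D (T m) = (m : ℂ) • T m)
    (W : Submodule Lp (Fin (n + 1) → Lp)) (hE : ∀ v ∈ W, Tdeg₀ D n v ∈ W) (hW : W ≠ ⊥) :
    W = ⊤ := by
  obtain ⟨w, hwW, hw⟩ := W.exists_mem_ne_zero_of_ne_bot hW
  set A : Matrix (Fin (n + 1)) (Fin (n + 1)) Lp := Matrix.of fun i j => (Tdeg₀ D n)^[j] w i
  have hdet : A.det ≠ 0 := Matrix.nonsingular_iff_det_ne_zero.mp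
    (Matrix.Nonsingular.of_linearIndependent_col (linearIndependent_iterate_Tdeg₀ hD hw))
  have hiter : ∀ j : ℕ, (Tdeg₀ D n)^[j] w ∈ W := fun j => by
    induction j with
    | zero => exact hwW
    | succ j ih => exact Function.iterate_succ_apply' (Tdeg₀ D n) j w ▸ hE _ ih
  have hcol : Submodule.span Lp (Set.range A.col) ≤ W :=
    Submodule.span_le.mpr <| Set.range_subset_iff.mpr fun j => hiter j
  have := LaurentPolynomial.finite_quotient_of_smul_mem hdet (W.restrictScalars ℂ)
    fun f => hcol (A.det_smul_mem_span_col f)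
  rw [← Submodule.restrictScalars_eq_top_iff ℂ]
  refine (W.restrictScalars ℂ).eq_top_of_mul_eq_mul_add_self (E := Tdeg₀ D n)
    (T := (T 1 : Lp) • LinearMap.id) (T' := (T (-1) : Lp) • LinearMap.id) (fun v hv => hE v hv)
    (fun v hv => W.smul_mem _ hv) (fun v hv => W.smul_mem _ hv) ?_ ?_ ?_ <;>
    refine LinearMap.ext fun u => ?_
  · simp only [Module.End.mul_apply, LinearMap.smul_apply, LinearMap.id_apply, smul_smul,
      ← T_add, add_neg_cancel, T_zero, one_smul, Module.End.one_apply]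
  · simp only [Module.End.mul_apply, LinearMap.smul_apply, LinearMap.id_apply, smul_smul,
      ← T_add, neg_add_cancel, T_zero, one_smul, Module.End.one_apply]
  · simp [Tdeg₀_T_one_smul hD]


namespace DegInv

variable {b : ℂ} {U V : Submodule ℂ (Fin (n + 1) → Lp)}

lemma right_le_left (h : DegInv D b U V) : V ≤ U := fun v hv => by
  have : -((T 0 : Lp) • v) ∈ U := (h 0 0 U.zero_mem v hv).2.2.1
  simpa [T_zero] using U.neg_mem this

lemma Tdeg₀_mem (h : DegInv D b U V) {u : Fin (n + 1) → Lp} (hu : u ∈ U) : Tdeg₀ D n u ∈ V := by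
  simpa [DegG, Tdeg_zero] using (h 0 u hu 0 V.zero_mem).2.2.2

lemma T_smul_mem (h : DegInv D b U V) (hb : b ≠ 1 / 2) (k : ℤ) {v : Fin (n + 1) → Lp}
    (hv : v ∈ V) : (T k : Lp) • v ∈ V := by
  rcases eq_or_ne k 0 with rfl | hk
  · simpa [T_zero] using hv
  have hdiff := V.sub_mem (h k v (h.right_le_left hv) 0 V.zero_mem).2.2.2
    (h k 0 U.zero_mem v hv).2.1
  simp only [DegG, DegL, Tdeg_eq, add_sub_add_left_eq_sub, ← sub_smul] at hdiff
  refine (V.smul_mem_iff ?_).mp hdiff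
  rw [← sub_mul]
  exact mul_ne_zero (by contrapose! hb; linear_combination hb) (Int.cast_ne_zero.mpr hk)

lemma smul_mem (h : DegInv D b U V) (hb : b ≠ 1 / 2) (a : Lp) {v : Fin (n + 1) → Lp}
    (hv : v ∈ V) : a • v ∈ V := by
  rw [← sum_coeff_smul_T a, Finset.sum_smul]
  exact V.sum_mem fun q _ =>
    smul_assoc (a.coeff q) (T q : Lp) v ▸ V.smul_mem _ (h.T_smul_mem hb q hv)

end DegInv

theorem stmt16 (D : Lp →ₗ[ℂ] Lp)
    (hD : ∀ n : ℤ, D (T n) = (n : ℂ) • T n)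
    (n : ℕ) (b : ℂ) (hb : b ≠ 1 / 2) :
    ∀ U V : Submodule ℂ (Fin (n + 1) → Lp), DegInv D b U V →
      (U = ⊥ ∧ V = ⊥) ∨ (U = ⊤ ∧ V = ⊤) := by
  intro U V h
  by_cases hU : U = ⊥
  · exact Or.inl ⟨hU, eq_bot_iff.mpr (hU ▸ h.right_le_left)⟩
  obtain ⟨u, huU, hu⟩ := U.exists_mem_ne_zero_of_ne_bot hU
  let V' : Submodule Lp (Fin (n + 1) → Lp) :=
    { V with smul_mem' := fun a _ hv => h.smul_mem hb a hv }
  have hV' : V' = ⊤ := V'.eq_top_of_Tdeg₀_mem hD (fun v hv => h.Tdeg₀_mem (h.right_le_left hv))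
    ((Submodule.ne_bot_iff _).mpr ⟨_, h.Tdeg₀_mem huU, Tdeg₀_ne_zero hD hu⟩)
  have hV : V = ⊤ := by
    rw [eq_top_iff]
    exact fun v _ => (hV'.symm ▸ Submodule.mem_top : v ∈ V')
  exact Or.inr ⟨eq_top_iff.mpr (hV ▸ h.right_le_left), hV⟩

end
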